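/- Let γ = 2^{−1/6} e^{iπ/4} = 2^{−2/3}(1 + i) and γ* = 2^{−2/3}(1 − i), and let M^O = [[1, 0, γ* − 1], [0, γ, 0], [1, 0, γ* − 1]], M^L = [[0, 1, 0], [0, 0, 0], [0, 0, 0]], M^R = [[0, 0, 0], [0, 0, 1], [0, 0, 0]] be the 3×3 complex matrices defining the new exact scar state |T⟩ of the PPXPP chain. Then for every n ≥ 4 and every PPXPP-allowed cyclic word s : ZMod n → {O, L, R}, Σ_{k ∈ ZMod n} Tr(F^{s_k} · M^{s_{k+1}} ⋯ M^{s_{k+n−1}}) = 0. (Hence |T⟩ is an exact E = 0 eigenstate of the periodic PPXPP chain.) -/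

import Mathlib

/-!
Every PPXPP-allowed two-letter block `ab` satisfies the local relation
`F^a M^b = A^a M^b - M^a A^b` for suitable matrices `A^s`. Inserted into the cyclic trace, it
turns the `k`-th summand into `u k - u (k + 1)` with
`u k = Tr (A^{s_k} M^{s_{k+1}} ⋯ M^{s_{k+n-1}})` (cyclicity of the trace moves `M^{s_k}` to the
end of the word), so the cyclic sum telescopes to zero.
-/

open Matrix

/-- The blocked three-letter alphabet `{O, L, R}`. -/
inductive Blk | O | L | R
deriving DecidableEq

/-- `γ = 2^{−1/6} e^{iπ/4} = 2^{−2/3}(1 + i)`. -/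
noncomputable def gam : ℂ := (((2 : ℝ) ^ ((-2 : ℝ) / 3) : ℝ) : ℂ) * (1 + Complex.I)

/-- `γ* = 2^{−2/3}(1 − i)`. -/
noncomputable def gamStar : ℂ := (((2 : ℝ) ^ ((-2 : ℝ) / 3) : ℝ) : ℂ) * (1 - Complex.I)

/-- The MPS tensors of the new exact scar state `|T⟩` of the PPXPP chain. -/
noncomputable def MT : Blk → Matrix (Fin 3) (Fin 3) ℂ
  | .O => !![1, 0, gamStar - 1; 0, gam, 0; 1, 0, gamStar - 1]
  | .L => !![0, 1, 0; 0, 0, 0; 0, 0, 0]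
  | .R => !![0, 0, 0; 0, 0, 1; 0, 0, 0]

/-- The defect matrices: `F^O = M^L + M^R`, `F^L = F^R = M^O`. -/
noncomputable def FT : Blk → Matrix (Fin 3) (Fin 3) ℂ
  | .O => MT .L + MT .R
  | .L => MT .O
  | .R => MT .O

section CyclicProd

variable {R : Type*} [Monoid R] {n : ℕ}

def cyclicProd (f : ZMod n → R) (a : ZMod n) (m : ℕ) : R :=
  (List.ofFn fun j : Fin m => f (a + j)).prod

theorem cyclicProd_succ (f : ZMod n → R) (a : ZMod n) (m : ℕ) :
    cyclicProd f a (m + 1) = f a * cyclicProd f (a + 1) m := by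
  simp only [cyclicProd, List.ofFn_succ, List.prod_cons, Fin.val_zero, Fin.val_succ]
  push_cast
  simp only [add_zero, add_assoc, add_comm (1 : ZMod n)]

theorem cyclicProd_succ' (f : ZMod n → R) (a : ZMod n) (m : ℕ) :
    cyclicProd f a (m + 1) = cyclicProd f a m * f (a + m) := by
  simp only [cyclicProd, List.ofFn_succ', List.prod_concat, Fin.val_castSucc, Fin.val_last]

end CyclicProd

theorem sum_trace_mul_cyclicProd_eq_zero {m R : Type*} [Fintype m] [DecidableEq m] [CommRing R]
    {n : ℕ} [NeZero n] (hn : 2 ≤ n) (F M A : ZMod n → Matrix m m R)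
    (h : ∀ k, F k * M (k + 1) = A k * M (k + 1) - M k * A (k + 1)) :
    ∑ k, trace (F k * cyclicProd M (k + 1) (n - 1)) = 0 := by
  obtain ⟨p, rfl⟩ : ∃ p, n = p + 2 := ⟨n - 2, by omega⟩
  set u : ZMod (p + 2) → R := fun k => trace (A k * cyclicProd M (k + 1) (p + 1))
  have wrap (k : ZMod (p + 2)) :
      cyclicProd M (k + 2) (p + 1) = cyclicProd M (k + 2) p * M k := by
    rw [cyclicProd_succ']
    congr 2
    have hp : ((p + 2 : ℕ) : ZMod (p + 2)) = 0 := ZMod.natCast_self _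
    push_cast at hp
    linear_combination hp
  have telescope (k : ZMod (p + 2)) :
      trace (F k * cyclicProd M (k + 1) (p + 1)) = u k - u (k + 1) := by
    have hk : k + 1 + 1 = k + 2 := by ring
    simp only [u, cyclicProd_succ M (k + 1), hk, wrap, ← mul_assoc, h, sub_mul, trace_sub]
    rw [trace_mul_cycle (A (k + 1))]
  calc ∑ k, trace (F k * cyclicProd M (k + 1) (p + 2 - 1))
      = ∑ k, (u k - u (k + 1)) := Finset.sum_congr rfl fun k _ => telescope k
    _ = 0 := by
      rw [Finset.sum_sub_distrib, sub_eq_zero]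
      exact (Equiv.sum_comp (Equiv.addRight 1) u).symm

open Complex

theorem gamStar_eq_neg_I_mul_gam : gamStar = -I * gam := by
  rw [gamStar, gam]
  linear_combination ((((2 : ℝ) ^ ((-2 : ℝ) / 3) : ℝ) : ℂ)) * I_sq

theorem gam_pow_three : gam ^ 3 = (I - 1) / 2 := by
  have h : ((2 : ℝ) ^ ((-2 : ℝ) / 3)) ^ 3 = 1 / 4 := by
    rw [← Real.rpow_natCast, ← Real.rpow_mul (by norm_num)]
    norm_num
  have h' : ((((2 : ℝ) ^ ((-2 : ℝ) / 3) : ℝ) : ℂ)) ^ 3 = 1 / 4 := by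
    rw [← ofReal_pow, h]
    push_cast
    ring
  rw [gam, mul_pow, h']
  linear_combination (3 / 4 + I / 4) * I_sq

noncomputable def AT : Blk → Matrix (Fin 3) (Fin 3) ℂ
  | .O => !![0, 1 - gam ^ 2, 0; gam ^ 2, 0, (1 + I) / 2 - gam ^ 2; 0, -gam ^ 2, 0]
  | .L => !![gamStar + gam ^ 2, 0, 0; 0, gam, 0; gamStar, 0, 0]
  | .R => !![gamStar + gam ^ 2, 0, -gam ^ 2; 0, 0, 0; gamStar, 0, 0]

/-- Entrywise, each case is a polynomial identity in `γ` and `i` modulo `i ^ 2 = -1` and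
`γ ^ 3 = (i - 1) / 2`. -/
theorem FT_mul_MT_of_allowed (a b : Blk)
    (h : ¬((a = .R ∧ b = .L) ∨ (a = .L ∧ b = .L) ∨ (a = .R ∧ b = .R))) :
    FT a * MT b = AT a * MT b - MT a * AT b := by
  have hI := I_sq
  have h3 := gam_pow_three
  cases a <;> cases b <;> simp only [reduceCtorEq, and_self, or_true, true_or, not_true] at h <;>
  · rw [eq_sub_iff_add_eq]
    simp only [FT, MT, AT, gamStar_eq_neg_I_mul_gam, mul_fin_three, of_add_of,
      cons_add_cons, empty_add_empty]
    refine congrArg of (vec3_eq (vec3_eq ?_ ?_ ?_) (vec3_eq ?_ ?_ ?_) (vec3_eq ?_ ?_ ?_)) <;> grind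

/-- for the `|T⟩` MPS tensors, the cyclic insertion sum vanishes
on every PPXPP-allowed cyclic word of length `n ≥ 4`, hence `|T⟩` is an exact
`E = 0` eigenstate of the periodic PPXPP chain. -/
theorem T_cyclic_insertion_sum_eq_zero
    (n : ℕ) [NeZero n] (hn : 4 ≤ n)
    (s : ZMod n → Blk)
    (hallow : ¬ ∃ k : ZMod n,
      (s k = Blk.R ∧ s (k + 1) = Blk.L) ∨
      (s k = Blk.L ∧ s (k + 1) = Blk.L) ∨
      (s k = Blk.R ∧ s (k + 1) = Blk.R)) :
    ∑ k : ZMod n,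
      Matrix.trace (FT (s k) *
        (List.ofFn fun j : Fin (n - 1) =>
          MT (s (k + 1 + ((j : ℕ) : ZMod n)))).prod) = 0 :=
  sum_trace_mul_cyclicProd_eq_zero (by omega) (fun k => FT (s k)) (fun k => MT (s k))
    (fun k => AT (s k)) fun k => FT_mul_MT_of_allowed _ _ fun hk => hallow ⟨k, hk⟩
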